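/- The restriction of the spherical blow-up Ψ_N to the punctured open northern hemisphere, Ψ_N : S^{n+1}_{N,+}\{N} → S^{n+1}_{N,+}\{N}, is an involutive bijection (indeed a smooth diffeomorphism): Ψ_N(Ψ_N(P)) = P for all P in S^{n+1}_{N,+}\{N}. -/

import Mathlib

open scoped RealInnerProductSpace

noncomputable def northPole (n : ℕ) : EuclideanSpace ℝ (Fin (n+2)) :=
  EuclideanSpace.single (Fin.last (n+1)) (1 : ℝ)

noncomputable def sphBlowUp {n : ℕ} (P : EuclideanSpace ℝ (Fin (n+2))) :
    EuclideanSpace ℝ (Fin (n+2)) :=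
  (Real.sqrt (1 - ⟪northPole n, P⟫ ^ 2))⁻¹ •
    (northPole n - ⟪northPole n, P⟫ • P)

/-- The punctured open northern hemisphere. -/
def puncturedHemisphere (n : ℕ) : Set (EuclideanSpace ℝ (Fin (n+2))) :=
  {P | P ∈ Metric.sphere (0 : EuclideanSpace ℝ (Fin (n+2))) 1 ∧
    0 < ⟪northPole n, P⟫ ∧ P ≠ northPole n}

lemma norm_northPole (n : ℕ) : ‖northPole n‖ = 1 := by
  simp [northPole, EuclideanSpace.norm_single]

lemma inner_northPole_self (n : ℕ) : ⟪northPole n, northPole n⟫ = 1 := by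
  rw [real_inner_self_eq_norm_sq, norm_northPole]; norm_num

lemma sphBlowUp_key {n : ℕ} {P : EuclideanSpace ℝ (Fin (n+2))}
    (hP : P ∈ puncturedHemisphere n) :
    sphBlowUp P ∈ puncturedHemisphere n ∧ sphBlowUp (sphBlowUp P) = P := by
  obtain ⟨hPs, hPt, hPN⟩ := hP
  set N := northPole n with hN
  have hnorm : ‖P‖ = 1 := by simpa using hPs
  set t := ⟪N, P⟫ with ht
  have ht1 : t < 1 := (inner_lt_one_iff_real_of_norm_eq_one (norm_northPole n) hnorm).mpr
    (fun h => hPN h.symm)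
  have h1t : 0 < 1 - t^2 := by nlinarith
  set s := Real.sqrt (1 - t^2) with hs
  have hs0 : 0 < s := Real.sqrt_pos.mpr h1t
  have hs2 : s^2 = 1 - t^2 := Real.sq_sqrt h1t.le
  have hs1 : s < 1 := by nlinarith
  set Q := sphBlowUp P with hQ
  have hQdef : Q = s⁻¹ • (N - t • P) := rfl
  have hinnerQ : ⟪N, Q⟫ = s := by
    rw [hQdef, inner_smul_right, inner_sub_right, inner_smul_right, inner_northPole_self,
      ← ht, show (1:ℝ) - t * t = s * s by nlinarith]
    field_simp
  have hnQ : ‖Q‖ = 1 := by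
    have hsq : ‖Q‖^2 = 1 := by
      rw [hQdef, norm_smul, mul_pow, norm_sub_sq_real, inner_smul_right, norm_smul,
        ← ht, norm_northPole, hnorm]
      rw [Real.norm_eq_abs, Real.norm_eq_abs, abs_of_pos (inv_pos.mpr hs0)]
      have h1 : |t| ^ 2 = t ^ 2 := sq_abs t
      have h2 : s⁻¹ ^ 2 = (s^2)⁻¹ := by rw [inv_pow]
      rw [h2, hs2]
      field_simp
      nlinarith [sq_abs t]
    nlinarith [norm_nonneg Q]
  have hQmem : Q ∈ puncturedHemisphere n := by
    refine ⟨by simpa using hnQ, by rw [← hN, hinnerQ]; exact hs0, ?_⟩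
    intro h
    rw [← hN] at h
    have : ⟪N, Q⟫ = 1 := by rw [h, hN, inner_northPole_self]
    rw [hinnerQ] at this
    linarith
  refine ⟨hQmem, ?_⟩
  have h1s : (1 : ℝ) - ⟪N, Q⟫^2 = t^2 := by rw [hinnerQ]; nlinarith
  show (Real.sqrt (1 - ⟪N, Q⟫ ^ 2))⁻¹ • (N - ⟪N, Q⟫ • Q) = P
  rw [h1s, hinnerQ, Real.sqrt_sq hPt.le, hQdef, smul_smul, mul_inv_cancel₀ hs0.ne',
    one_smul, sub_sub_cancel, smul_smul, inv_mul_cancel₀ hPt.ne', one_smul]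

/-- The spherical blow-up restricts to an involutive bijection (indeed a smooth
diffeomorphism) of the punctured open northern hemisphere. -/
theorem stmt_13 {n : ℕ} :
    Set.BijOn sphBlowUp (puncturedHemisphere n) (puncturedHemisphere n) ∧
      (∀ P ∈ puncturedHemisphere n, sphBlowUp (sphBlowUp P) = P) ∧
      ContDiffOn ℝ (⊤ : ℕ∞) sphBlowUp (puncturedHemisphere n) := by
  have hmaps : Set.MapsTo sphBlowUp (puncturedHemisphere n) (puncturedHemisphere n) :=
    fun P hP => (sphBlowUp_key hP).1
  have hinv : ∀ P ∈ puncturedHemisphere n, sphBlowUp (sphBlowUp P) = P :=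
    fun P hP => (sphBlowUp_key hP).2
  refine ⟨⟨hmaps, ?_, ?_⟩, hinv, ?_⟩
  · intro a ha b hb hab
    have := hinv a ha
    rw [hab, hinv b hb] at this
    exact this.symm
  · intro Q hQ
    exact ⟨sphBlowUp Q, hmaps hQ, hinv Q hQ⟩
  · intro P hP
    obtain ⟨hPs, hPt, hPN⟩ := hP
    have hnorm : ‖P‖ = 1 := by simpa using hPs
    have ht1 : ⟪northPole n, P⟫ < 1 :=
      (inner_lt_one_iff_real_of_norm_eq_one (norm_northPole n) hnorm).mpr (fun h => hPN h.symm)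
    have h1t : 0 < 1 - ⟪northPole n, P⟫^2 := by nlinarith
    have hinner : ContDiff ℝ (⊤ : ℕ∞) fun x : EuclideanSpace ℝ (Fin (n+2)) => ⟪northPole n, x⟫ :=
      (innerSL ℝ (northPole n)).contDiff
    have h1 : ContDiffAt ℝ (⊤ : ℕ∞) (fun x : EuclideanSpace ℝ (Fin (n+2)) =>
        (Real.sqrt (1 - ⟪northPole n, x⟫ ^ 2))⁻¹) P := by
      refine ContDiffAt.inv ?_ (Real.sqrt_pos.mpr h1t).ne'
      exact (Real.contDiffAt_sqrt h1t.ne').comp P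
        ((contDiff_const.sub (hinner.pow 2)).contDiffAt)
    have h2 : ContDiffAt ℝ (⊤ : ℕ∞) (fun x : EuclideanSpace ℝ (Fin (n+2)) =>
        northPole n - ⟪northPole n, x⟫ • x) P :=
      (contDiff_const.sub (hinner.smul contDiff_id)).contDiffAt
    exact (h1.smul h2).contDiffWithinAt
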